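/- If x = x(n) > 0 is defined by the equation (n/√(2π)) · (1/x) · e^{-x²/2} = (1+δ)k(n), where δ ∈ (0,1) is fixed and k(n) → ∞ with k(n) = o(n), then x² = 2 log(n/k(n)) + O(log log(n/k(n))) as n → ∞. -/
import Mathlib


open Filter Topology Asymptotics Real

theorem x_squared_asymptotics
    (k : ℕ → ℝ) (hk : Tendsto k atTop atTop)
    (hko : Tendsto (fun n => k n / n) atTop (𝓝 0))
    (δ : ℝ) (hδ0 : 0 < δ) (hδ1 : δ < 1)
    (x : ℕ → ℝ) (hx : ∀ᶠ n in atTop, 0 < x n)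
    (heq : ∀ᶠ n in atTop,
      (n / Real.sqrt (2 * Real.pi)) * (1 / x n) * Real.exp (-(x n) ^ 2 / 2)
        = (1 + δ) * k n) :
    (fun n => (x n) ^ 2 - 2 * Real.log (n / k n)) =O[atTop]
      (fun n => Real.log (Real.log (n / k n))) := by
  set C : ℝ := Real.log (2 * Real.pi) + 2 * Real.log (1 + δ) with hC
  have hπ : (1:ℝ) < 2 * Real.pi := by nlinarith [Real.pi_gt_three]
  have hCpos : 0 < C := by
    have h1 : 0 < Real.log (2 * Real.pi) := Real.log_pos hπ
    have h2 : 0 < Real.log (1 + δ) := Real.log_pos (by linarith)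
    simp only [hC]; linarith
  have hk1 : ∀ᶠ n in atTop, 1 ≤ k n := hk.eventually_ge_atTop 1
  have hn1 : ∀ᶠ n : ℕ in atTop, (1:ℝ) ≤ n := by
    filter_upwards [eventually_ge_atTop 1] with n hn
    exact_mod_cast hn
  have hnk : Tendsto (fun n : ℕ => (n:ℝ) / k n) atTop atTop := by
    have hpos : ∀ᶠ n : ℕ in atTop, k n / (n:ℝ) ∈ Set.Ioi (0:ℝ) := by
      filter_upwards [hk1, hn1] with n h1 h2
      exact Set.mem_Ioi.mpr (div_pos (lt_of_lt_of_le one_pos h1) (lt_of_lt_of_le one_pos h2))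
    have h := Filter.Tendsto.inv_tendsto_nhdsGT_zero
      (tendsto_nhdsWithin_of_tendsto_nhds_of_eventually_within _ hko hpos)
    refine Tendsto.congr' ?_ h
    filter_upwards with n
    simp [Pi.inv_apply, inv_div]
  have hL : Tendsto (fun n : ℕ => Real.log ((n:ℝ) / k n)) atTop atTop :=
    Real.tendsto_log_atTop.comp hnk
  rw [Asymptotics.isBigO_iff]
  refine ⟨2 + C, ?_⟩
  filter_upwards [hx, heq, hk1, hn1, hL.eventually_ge_atTop (3 + C)] with n hx0 heqn hkn hnn hLn
  set L := Real.log ((n:ℝ) / k n) with hLdef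
  have hkpos : 0 < k n := lt_of_lt_of_le one_pos hkn
  have hnpos : 0 < (n:ℝ) := lt_of_lt_of_le one_pos hnn
  have hn0 : (n:ℝ) ≠ 0 := ne_of_gt hnpos
  have hs0 : Real.sqrt (2 * Real.pi) ≠ 0 := by positivity
  have hLpos : 0 < L := by linarith
  have hLe : (1:ℝ) ≤ Real.log L := by
    rw [Real.le_log_iff_exp_le hLpos]
    have he : Real.exp 1 < 3 := by
      have := Real.exp_one_lt_d9; linarith
    linarith
  -- key identity
  have key : (x n) ^ 2 = 2 * L - 2 * Real.log (x n) - C := by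
    have hlog := congrArg Real.log heqn
    rw [Real.log_mul (mul_ne_zero (div_ne_zero hn0 hs0) (one_div_ne_zero hx0.ne'))
        (Real.exp_ne_zero _),
      Real.log_mul (div_ne_zero hn0 hs0) (one_div_ne_zero hx0.ne'),
      Real.log_div hn0 hs0, Real.log_exp, one_div, Real.log_inv,
      Real.log_sqrt (by positivity),
      Real.log_mul (by positivity : (1 + δ) ≠ 0) (ne_of_gt hkpos)] at hlog
    have hLd : L = Real.log n - Real.log (k n) := by
      rw [hLdef, Real.log_div hn0 (ne_of_gt hkpos)]
    rw [hLd, hC]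
    linarith
  -- bounds on x
  have hxub : x n ≤ Real.sqrt (2 * L) := by
    by_contra h
    push_neg at h
    have hs1 : (1:ℝ) ≤ Real.sqrt (2 * L) := by
      rw [show (1:ℝ) = Real.sqrt 1 from Real.sqrt_one.symm]
      exact Real.sqrt_le_sqrt (by linarith)
    have h1 : 1 ≤ x n := le_of_lt (lt_of_le_of_lt hs1 h)
    have h2 : 2 * L < (x n) ^ 2 := by
      nlinarith [Real.sq_sqrt (show (0:ℝ) ≤ 2 * L by linarith), Real.sqrt_nonneg (2 * L)]
    have h3 : 0 ≤ Real.log (x n) := Real.log_nonneg h1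
    linarith
  have hxlb : 1 ≤ x n := by
    by_contra h
    push_neg at h
    have h3 : Real.log (x n) ≤ 0 := Real.log_nonpos (le_of_lt hx0) (le_of_lt h)
    have h4 : (x n) ^ 2 < 1 := by nlinarith
    linarith
  have hlogx_lb : 0 ≤ Real.log (x n) := Real.log_nonneg hxlb
  have hlogx_ub : Real.log (x n) ≤ Real.log L := by
    have h1 : Real.log (x n) ≤ Real.log (Real.sqrt (2 * L)) := by
      gcongr
    rw [Real.log_sqrt (by linarith), Real.log_mul two_ne_zero (ne_of_gt hLpos)] at h1
    have hlog2 : Real.log 2 ≤ 1 := by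
      have := Real.log_two_lt_d9; linarith
    linarith
  rw [Real.norm_eq_abs, Real.norm_eq_abs, abs_of_nonneg (by linarith : (0:ℝ) ≤ Real.log L)]
  have hrw : (x n) ^ 2 - 2 * L = -(2 * Real.log (x n) + C) := by linarith
  rw [hrw, abs_neg, abs_of_nonneg (by linarith)]
  nlinarith [hLe, hlogx_ub, hlogx_lb, hCpos]
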